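/- arXiv:2109.08902 — 5 statements merged into one kernel-verified Lean document; each statement's English description precedes it below -/
import Mathlib

section
/- Let G = (V,E) be a finite simple graph with adjacency matrix A (zero diagonal) and let γ ∈ (0,1]. For x ∈ {0,1}^V with support V' = {i : x_i = 1}, the constraint Σ_{i∈V} x_i (γ x_i + Σ_{j∈V} (A_{ij} − γ) x_j) ≥ 0 holds if and only if V' is a γ-clique of G. Consequently, the optimal value of the 0–1 program: maximize Σ_{i∈V} x_i subject to x ∈ {0,1}^V and Σ_{i∈V} x_i (γ x_i + Σ_{j∈V} (A_{ij} − γ) x_j) ≥ 0, equals the γ-clique number ω_γ(G). -/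
open Finset

/-- Number of edges of `G` with both endpoints in `V'`. -/
def edgesIn {V : Type*} [Fintype V] [DecidableEq V] (G : SimpleGraph V)
    [DecidableRel G.Adj] (V' : Finset V) : ℕ :=
  (G.edgeFinset.filter fun e => ∀ v ∈ e, v ∈ V').card

/-- `V'` is a `γ`-clique of `G`. -/
def IsQuasiClique {V : Type*} [Fintype V] [DecidableEq V] (G : SimpleGraph V)
    [DecidableRel G.Adj] (γ : ℝ) (V' : Finset V) : Prop :=
  (edgesIn G V' : ℝ) ≥ γ * (V'.card.choose 2 : ℕ)

/-- The `γ`-clique number of `G`. -/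
noncomputable def quasiCliqueNum {V : Type*} [Fintype V] [DecidableEq V]
    (G : SimpleGraph V) [DecidableRel G.Adj] (γ : ℝ) : ℕ :=
  sSup {k : ℕ | ∃ V' : Finset V, IsQuasiClique G γ V' ∧ V'.card = k}

/-!
For a 0/1 vector `x` with support `S`, the left-hand side of the constraint is
`γ|S| + xᵀAx - γ|S|²`, and `xᵀAx` counts every edge inside `S` twice (handshake lemma in the
induced subgraph), so it equals `2 (e(S) - γ C(|S|, 2))`. Feasibility is therefore exactly the
`γ`-clique condition on the support, and `x ↦ S` is a size-preserving bijection between feasible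
vectors and `γ`-cliques, so the two suprema agree.
-/

namespace SimpleGraph

variable {V : Type*} (G : SimpleGraph V) [DecidableRel G.Adj]

theorem degree_induce_eq_card_filter_adj [DecidableEq V] (S : Finset V) (v : S) :
    (G.induce ↑S).degree v = #{j ∈ S | G.Adj v j} := by
  rw [← card_neighborFinset_eq_degree, ← card_map (.subtype _)]
  congr 1
  ext j
  simp [and_comm]

variable [Fintype V] [DecidableEq V]

theorem edgesIn_eq_card_edgeFinset_induce (S : Finset V) :
    edgesIn G S = #(G.induce ↑S).edgeFinset := by
  rw [← card_filter_edgeFinset_toFinset_subset, edgesIn]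
  simp only [subset_iff, Sym2.mem_toFinset]

theorem sum_card_filter_adj_eq_two_mul_edgesIn (S : Finset V) :
    ∑ i ∈ S, #{j ∈ S | G.Adj i j} = 2 * edgesIn G S := by
  rw [edgesIn_eq_card_edgeFinset_induce, ← sum_degrees_eq_twice_card_edges,
    ← Finset.sum_coe_sort S]
  simp only [degree_induce_eq_card_filter_adj]
  rfl

end SimpleGraph

theorem eq_ite_mem_filter_eq_one {V R : Type*} [Fintype V] [DecidableEq V] [Zero R] [One R]
    [DecidableEq R] {x : V → R} (hx : ∀ i, x i = 0 ∨ x i = 1) :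
    x = fun i => if i ∈ univ.filter (x · = 1) then 1 else 0 := by
  ext i
  rcases hx i with h | h <;> simp [h]

theorem filter_ite_mem_eq_one {V R : Type*} [Fintype V] [DecidableEq V] [Zero R] [One R]
    [NeZero (1 : R)] [DecidableEq R] (S : Finset V) :
    univ.filter (fun i => (if i ∈ S then (1 : R) else 0) = 1) = S := by
  ext i
  by_cases h : i ∈ S <;> simp [h]

section QuasiCliqueConstraint

variable {V : Type*} [Fintype V] [DecidableEq V] (G : SimpleGraph V) [DecidableRel G.Adj] (γ : ℝ)

def quasiCliqueConstraint (A : V → V → ℝ) (x : V → ℝ) : ℝ :=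
  ∑ i, x i * (γ * x i + ∑ j, (A i j - γ) * x j)

theorem quasiCliqueConstraint_ite_mem (S : Finset V) :
    quasiCliqueConstraint γ (G.adjMatrix ℝ) (fun i => if i ∈ S then 1 else 0) =
      2 * (edgesIn G S - γ * ((#S).choose 2 : ℕ)) := by
  have h := congrArg (Nat.cast : ℕ → ℝ) (G.sum_card_filter_adj_eq_two_mul_edgesIn S)
  push_cast at h
  simp only [quasiCliqueConstraint, mul_ite, mul_one, mul_zero, SimpleGraph.adjMatrix_apply,
    sum_ite_mem, univ_inter, sum_sub_distrib, sum_boole, sum_const, nsmul_eq_mul, ite_mul,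
    one_mul, zero_mul, sum_add_distrib, inter_self]
  rw [h, Nat.cast_choose_two]
  ring

theorem quasiCliqueConstraint_ite_mem_nonneg_iff (S : Finset V) :
    0 ≤ quasiCliqueConstraint γ (G.adjMatrix ℝ) (fun i => if i ∈ S then 1 else 0) ↔
      IsQuasiClique G γ S := by
  rw [quasiCliqueConstraint_ite_mem, mul_nonneg_iff_of_pos_left two_pos, sub_nonneg,
    IsQuasiClique, ge_iff_le]

theorem quasiCliqueConstraint_nonneg_iff {x : V → ℝ} (hx : ∀ i, x i = 0 ∨ x i = 1) :
    0 ≤ quasiCliqueConstraint γ (G.adjMatrix ℝ) x ↔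
      IsQuasiClique G γ (univ.filter (x · = 1)) := by
  have h := quasiCliqueConstraint_ite_mem_nonneg_iff G γ (univ.filter (x · = 1))
  rwa [← eq_ite_mem_filter_eq_one hx] at h

end QuasiCliqueConstraint

theorem pattillo_mip_correct_general {V : Type*} [Fintype V] [DecidableEq V]
    (G : SimpleGraph V) [DecidableRel G.Adj]
    (A : V → V → ℝ) (hA : ∀ i j, A i j = if G.Adj i j then 1 else 0)
    (γ : ℝ) :
    (∀ x : V → ℝ, (∀ i, x i = 0 ∨ x i = 1) →
      (∑ i, x i * (γ * x i + ∑ j, (A i j - γ) * x j) ≥ 0 ↔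
        IsQuasiClique G γ (Finset.univ.filter fun i => x i = 1))) ∧
    sSup {k : ℕ | ∃ x : V → ℝ, (∀ i, x i = 0 ∨ x i = 1) ∧
        ∑ i, x i * (γ * x i + ∑ j, (A i j - γ) * x j) ≥ 0 ∧
        (Finset.univ.filter fun i => x i = 1).card = k}
      = quasiCliqueNum G γ := by
  obtain rfl : A = G.adjMatrix ℝ := funext₂ hA
  refine ⟨fun x hx => quasiCliqueConstraint_nonneg_iff G γ hx, ?_⟩
  rw [quasiCliqueNum]
  congr 1
  ext k
  constructor
  · rintro ⟨x, hx, hfeasible, rfl⟩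
    exact ⟨_, (quasiCliqueConstraint_nonneg_iff G γ hx).1 hfeasible, rfl⟩
  · rintro ⟨S, hS, rfl⟩
    refine ⟨fun i => if i ∈ S then 1 else 0, fun i => ?_,
      (quasiCliqueConstraint_ite_mem_nonneg_iff G γ S).2 hS, by rw [filter_ite_mem_eq_one]⟩
    by_cases h : i ∈ S <;> simp [h]

theorem pattillo_mip_correct {V : Type*} [Fintype V] [DecidableEq V]
    (G : SimpleGraph V) [DecidableRel G.Adj]
    (A : V → V → ℝ) (hA : ∀ i j, A i j = if G.Adj i j then 1 else 0)
    (γ : ℝ) (hγ : γ ∈ Set.Ioc (0 : ℝ) 1) :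
    (∀ x : V → ℝ, (∀ i, x i = 0 ∨ x i = 1) →
      (∑ i, x i * (γ * x i + ∑ j, (A i j - γ) * x j) ≥ 0 ↔
        IsQuasiClique G γ (Finset.univ.filter fun i => x i = 1))) ∧
    sSup {k : ℕ | ∃ x : V → ℝ, (∀ i, x i = 0 ∨ x i = 1) ∧
        ∑ i, x i * (γ * x i + ∑ j, (A i j - γ) * x j) ≥ 0 ∧
        (Finset.univ.filter fun i => x i = 1).card = k}
      = quasiCliqueNum G γ :=
  pattillo_mip_correct_general G A hA γ
end

section
/- Let G = (V,E) be a finite simple graph with |V| = n and let γ ∈ (0,1]. Consider the program: maximize Σ_{i∈V} x_i over x ∈ {0,1}^V, reals z_{ij} ≥ 0 for {i,j} ∈ E, and reals s_t ≥ 0 for t ∈ {0,1,…,n}, subject to z_{ij} ≤ x_i and z_{ij} ≤ x_j for all {i,j} ∈ E, Σ_{t=0}^{n} s_t = 1, Σ_{i∈V} x_i = Σ_{t=0}^{n} t·s_t, and Σ_{{i,j}∈E} z_{ij} ≥ γ · Σ_{t=0}^{n} (t(t−1)/2)·s_t. Then the optimal value of this program equals the γ-clique number ω_γ(G). -/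
open Finset

/-! A feasible point of the program has `x` the indicator of some `V'`, and `z` is bounded on each
edge by the indicator of "both ends in `V'`", so the edge sum is at most `edgesIn G V'`. The `s_t`
form a probability distribution with mean `|V'|`, and since `t ↦ t(t-1)/2` is convex, Jensen's
inequality bounds the right-hand side of the edge constraint below by `γ·C(|V'|,2)`: `V'` is a
`γ`-clique. Conversely a `γ`-clique `V'` gives the feasible point with `x`, `z` its indicators
and `s` the point mass at `|V'|`. -/

lemma mean_mul_mean_sub_one_le {ι : Type*} {S : Finset ι} {w f : ι → ℝ}
    (hw : ∀ i ∈ S, 0 ≤ w i) (hw₁ : ∑ i ∈ S, w i = 1) :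
    (∑ i ∈ S, f i * w i) * ((∑ i ∈ S, f i * w i) - 1) / 2
      ≤ ∑ i ∈ S, (f i * (f i - 1) / 2) * w i := by
  have jensen : (∑ i ∈ S, f i * w i) ^ 2 ≤ ∑ i ∈ S, f i ^ 2 * w i := by
    simpa [smul_eq_mul, mul_comm] using
      (even_two.convexOn_pow (𝕜 := ℝ)).map_sum_le hw hw₁ (p := f) fun _ _ => Set.mem_univ _
  have expand : ∑ i ∈ S, (f i * (f i - 1) / 2) * w i
      = (∑ i ∈ S, f i ^ 2 * w i - ∑ i ∈ S, f i * w i) / 2 := by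
    rw [← sum_sub_distrib, sum_div]
    exact sum_congr rfl fun _ _ => by ring
  rw [expand]
  linarith

section Graph

variable {V : Type*} [Fintype V] [DecidableEq V] (G : SimpleGraph V) [DecidableRel G.Adj]

omit [DecidableEq V] in
lemma sum_eq_card_filter_eq_one {x : V → ℝ} (hx : ∀ i, x i = 0 ∨ x i = 1) :
    ∑ i, x i = #{i | x i = 1} := by
  rw [card_filter, Nat.cast_sum]
  refine sum_congr rfl fun i _ => ?_
  rcases hx i with h | h <;> simp [h]

lemma sum_edgeFinset_le_edgesIn {x : V → ℝ} {z : Sym2 V → ℝ} (hx : ∀ i, x i = 0 ∨ x i = 1)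
    (hz : ∀ e ∈ G.edgeFinset, ∀ v ∈ e, z e ≤ x v) :
    ∑ e ∈ G.edgeFinset, z e ≤ edgesIn G {i | x i = 1} := by
  rw [edgesIn, card_filter, Nat.cast_sum]
  refine sum_le_sum fun e he => ?_
  split_ifs with hin
  · have hx₁ : x e.out.1 = 1 := by simpa using hin _ e.out_fst_mem
    simpa [hx₁] using hz e he _ e.out_fst_mem
  · push Not at hin
    obtain ⟨w, hw, hxw⟩ := hin
    have hxw₀ := (hx w).resolve_right (by simpa using hxw)
    linarith [hz e he w hw]

theorem isQuasiClique_of_feasible {γ : ℝ} (hγ : 0 ≤ γ) {T : Finset ℕ} {x : V → ℝ}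
    {z : Sym2 V → ℝ} {s : ℕ → ℝ} (hx : ∀ i, x i = 0 ∨ x i = 1)
    (hz : ∀ e ∈ G.edgeFinset, ∀ v ∈ e, z e ≤ x v) (hs : ∀ t ∈ T, 0 ≤ s t)
    (hs₁ : ∑ t ∈ T, s t = 1) (hxs : ∑ i, x i = ∑ t ∈ T, (t : ℝ) * s t)
    (hedge : ∑ e ∈ G.edgeFinset, z e ≥ γ * ∑ t ∈ T, ((t : ℝ) * ((t : ℝ) - 1) / 2) * s t) :
    IsQuasiClique G γ {i | x i = 1} := by
  rw [IsQuasiClique, Nat.cast_choose_two, ← sum_eq_card_filter_eq_one hx, hxs]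
  calc γ * ((∑ t ∈ T, (t : ℝ) * s t) * ((∑ t ∈ T, (t : ℝ) * s t) - 1) / 2)
      ≤ γ * ∑ t ∈ T, ((t : ℝ) * ((t : ℝ) - 1) / 2) * s t :=
        mul_le_mul_of_nonneg_left (mean_mul_mean_sub_one_le hs hs₁) hγ
    _ ≤ ∑ e ∈ G.edgeFinset, z e := hedge
    _ ≤ edgesIn G {i | x i = 1} := sum_edgeFinset_le_edgesIn G hx hz

end Graph

theorem veremyev_mip_correct {V : Type*} [Fintype V] [DecidableEq V]
    (G : SimpleGraph V) [DecidableRel G.Adj]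
    (γ : ℝ) (hγ : γ ∈ Set.Ioc (0 : ℝ) 1) :
    sSup {k : ℕ | ∃ (x : V → ℝ) (z : Sym2 V → ℝ) (s : ℕ → ℝ),
        (∀ i, x i = 0 ∨ x i = 1) ∧
        (∀ e ∈ G.edgeFinset, 0 ≤ z e ∧ ∀ v ∈ e, z e ≤ x v) ∧
        (∀ t ∈ Finset.range (Fintype.card V + 1), 0 ≤ s t) ∧
        ∑ t ∈ Finset.range (Fintype.card V + 1), s t = 1 ∧
        ∑ i, x i = ∑ t ∈ Finset.range (Fintype.card V + 1), (t : ℝ) * s t ∧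
        ∑ e ∈ G.edgeFinset, z e
          ≥ γ * ∑ t ∈ Finset.range (Fintype.card V + 1),
              ((t : ℝ) * ((t : ℝ) - 1) / 2) * s t ∧
        (Finset.univ.filter fun i => x i = 1).card = k}
      = quasiCliqueNum G γ := by
  refine congrArg sSup (Set.ext fun k => ⟨?_, ?_⟩)
  · rintro ⟨x, z, s, hx, hz, hs, hs₁, hxs, hedge, rfl⟩
    exact ⟨_, isQuasiClique_of_feasible G hγ.1.le hx (fun e he => (hz e he).2) hs hs₁ hxs hedge,
      rfl⟩
  · rintro ⟨V', hV', rfl⟩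
    have hcard : V'.card ∈ range (Fintype.card V + 1) :=
      mem_range_succ_iff.2 (card_le_univ V')
    refine ⟨fun i => if i ∈ V' then 1 else 0, fun e => if ∀ v ∈ e, v ∈ V' then 1 else 0,
      fun t => if t = V'.card then 1 else 0, fun i => by beta_reduce; split_ifs <;> simp,
      fun e _ => ⟨by positivity, fun v hv => by beta_reduce; split_ifs <;> simp_all⟩,
      fun t _ => by positivity, by simp [hcard], by simp [hcard], ?_, by simp⟩
    simpa [hcard, sum_boole, IsQuasiClique, edgesIn, Nat.cast_choose_two] using hV'
end

section
/- Let G = (V,E) be a finite simple graph with |V| = n and let γ ∈ (0,1]. Consider the program: maximize Σ_{i∈V} x_i over x ∈ {0,1}^V, reals w_i for i ∈ V, and reals s_t ≥ 0 for t ∈ {0,1,…,n}, subject to w_i ≤ deg_G(i)·x_i and w_i ≤ Σ_{j:{i,j}∈E} x_j for all i ∈ V, Σ_{t=0}^{n} s_t = 1, Σ_{i∈V} x_i = Σ_{t=0}^{n} t·s_t, and Σ_{i∈V} w_i ≥ γ · Σ_{t=0}^{n} t(t−1)·s_t. Then the optimal value of this program equals the γ-clique number ω_γ(G). -/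
open Finset

/-!
A feasible point of the program is a `0/1` vector `x` with support `S`, together with a
distribution `s` on the possible sizes whose mean is `|S|`. The constraints on `w` force
`w i ≤ 0` off `S` and `w i ≤ |N(i) ∩ S|` on `S`, so `∑ w ≤ 2 e(S)` by the handshake lemma, while
Jensen's inequality for the convex function `t ↦ t (t - 1)` gives
`∑ t (t - 1) s_t ≥ |S| (|S| - 1) = 2 C(|S|, 2)`. Hence the support of a feasible point is a
`γ`-clique. Conversely a `γ`-clique `S` is the support of the feasible point with `x = 1_S`,
`w i = |N(i) ∩ S|` on `S` and `s` the point mass at `|S|`.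
-/

theorem mul_sub_one_le_sum_mul_sub_one {ι : Type*} (S : Finset ι) (f s : ι → ℝ)
    (hs : ∀ t ∈ S, 0 ≤ s t) (h1 : ∑ t ∈ S, s t = 1) :
    (∑ t ∈ S, f t * s t) * ((∑ t ∈ S, f t * s t) - 1) ≤ ∑ t ∈ S, f t * (f t - 1) * s t := by
  have jensen : (∑ t ∈ S, f t * s t) ^ 2 ≤ ∑ t ∈ S, f t ^ 2 * s t := by
    simpa only [smul_eq_mul, mul_comm (s _)] using
      (even_two.convexOn_pow (𝕜 := ℝ)).map_sum_le hs h1 fun t _ => Set.mem_univ (f t)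
  have expand :
      ∑ t ∈ S, f t * (f t - 1) * s t = ∑ t ∈ S, f t ^ 2 * s t - ∑ t ∈ S, f t * s t := by
    rw [← sum_sub_distrib]
    exact sum_congr rfl fun t _ => by ring
  rw [expand]
  nlinarith

section Graph

variable {V : Type*} [Fintype V] [DecidableEq V] (G : SimpleGraph V) [DecidableRel G.Adj]

theorem edgesIn_eq_card_edgeFinset_induce (S : Finset V) :
    edgesIn G S = #(G.induce ↑S).edgeFinset := by
  rw [edgesIn, ← G.card_filter_edgeFinset_toFinset_subset]
  exact congrArg card (filter_congr fun e _ => by simp [subset_iff])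

theorem degree_induce_eq_card_neighborFinset_inter (S : Finset V) (v : ↑(S : Set V)) :
    (G.induce ↑S).degree v = #(G.neighborFinset v ∩ S) := by
  rw [← SimpleGraph.card_neighborFinset_eq_degree]
  convert congrArg card (G.map_neighborFinset_induce v) using 1
  · rw [card_map]
    congr!
  · simp

theorem two_mul_edgesIn (S : Finset V) :
    2 * edgesIn G S = ∑ i ∈ S, #(G.neighborFinset i ∩ S) := by
  rw [edgesIn_eq_card_edgeFinset_induce, ← SimpleGraph.sum_degrees_eq_twice_card_edges,
    ← sum_coe_sort S]
  exact Fintype.sum_congr _ _ (degree_induce_eq_card_neighborFinset_inter G S)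

theorem sum_neighborFinset_ite_mem (S : Finset V) (i : V) :
    ∑ j ∈ G.neighborFinset i, (if j ∈ S then (1 : ℝ) else 0) = #(G.neighborFinset i ∩ S) := by
  rw [sum_boole, filter_mem_eq_inter]

theorem sum_ite_card_neighborFinset_inter (S : Finset V) :
    ∑ i, (if i ∈ S then (#(G.neighborFinset i ∩ S) : ℝ) else 0) = 2 * edgesIn G S := by
  rw [sum_ite_mem, univ_inter]
  exact_mod_cast (two_mul_edgesIn G S).symm

theorem sum_le_two_mul_edgesIn {S : Finset V} {w : V → ℝ}
    (hdeg : ∀ i, w i ≤ (G.degree i : ℝ) * (if i ∈ S then 1 else 0))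
    (hnbr : ∀ i, w i ≤ ∑ j ∈ G.neighborFinset i, if j ∈ S then 1 else 0) :
    ∑ i, w i ≤ 2 * edgesIn G S :=
  calc ∑ i, w i ≤ ∑ i, if i ∈ S then (#(G.neighborFinset i ∩ S) : ℝ) else 0 := by
        refine sum_le_sum fun i _ => ?_
        split_ifs with hi
        · simpa only [sum_neighborFinset_ite_mem] using hnbr i
        · simpa [hi] using hdeg i
    _ = 2 * edgesIn G S := sum_ite_card_neighborFinset_inter G S

theorem two_mul_edgesIn_ge_iff_isQuasiClique {γ : ℝ} {S : Finset V} :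
    γ * (#S * (#S - 1)) ≤ 2 * edgesIn G S ↔ IsQuasiClique G γ S := by
  rw [IsQuasiClique, Nat.cast_choose_two]
  constructor <;> intro h <;> linarith

/-- The objective values `∑ i, x i = #{i | x i = 1}` at the feasible points of the program. -/
def compactMIPValues (γ : ℝ) : Set ℕ :=
  {k : ℕ | ∃ (x : V → ℝ) (w : V → ℝ) (s : ℕ → ℝ),
    (∀ i, x i = 0 ∨ x i = 1) ∧
    (∀ i, w i ≤ (G.degree i : ℝ) * x i) ∧
    (∀ i, w i ≤ ∑ j ∈ G.neighborFinset i, x j) ∧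
    (∀ t ∈ Finset.range (Fintype.card V + 1), 0 ≤ s t) ∧
    ∑ t ∈ Finset.range (Fintype.card V + 1), s t = 1 ∧
    ∑ i, x i = ∑ t ∈ Finset.range (Fintype.card V + 1), (t : ℝ) * s t ∧
    ∑ i, w i
      ≥ γ * ∑ t ∈ Finset.range (Fintype.card V + 1),
          ((t : ℝ) * ((t : ℝ) - 1)) * s t ∧
    (Finset.univ.filter fun i => x i = 1).card = k}

theorem isQuasiClique_of_feasible_s9 {γ : ℝ} (hγ : 0 ≤ γ) {S : Finset V} {w : V → ℝ}
    {s : ℕ → ℝ} (T : Finset ℕ)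
    (hdeg : ∀ i, w i ≤ (G.degree i : ℝ) * (if i ∈ S then 1 else 0))
    (hnbr : ∀ i, w i ≤ ∑ j ∈ G.neighborFinset i, if j ∈ S then 1 else 0)
    (hs0 : ∀ t ∈ T, 0 ≤ s t) (hs1 : ∑ t ∈ T, s t = 1) (hmean : (#S : ℝ) = ∑ t ∈ T, (t : ℝ) * s t)
    (hw : ∑ i, w i ≥ γ * ∑ t ∈ T, ((t : ℝ) * ((t : ℝ) - 1)) * s t) :
    IsQuasiClique G γ S := by
  have hsize : (#S : ℝ) * (#S - 1) ≤ ∑ t ∈ T, ((t : ℝ) * ((t : ℝ) - 1)) * s t := by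
    simpa only [← hmean] using mul_sub_one_le_sum_mul_sub_one T (fun t => (t : ℝ)) s hs0 hs1
  rw [← two_mul_edgesIn_ge_iff_isQuasiClique]
  nlinarith [sum_le_two_mul_edgesIn G hdeg hnbr, mul_le_mul_of_nonneg_left hsize hγ]

theorem card_mem_compactMIPValues {γ : ℝ} {S : Finset V} (hS : IsQuasiClique G γ S) :
    #S ∈ compactMIPValues G γ := by
  have hS_size : #S ∈ range (Fintype.card V + 1) := mem_range_succ_iff.2 (card_le_univ S)
  refine ⟨fun i => if i ∈ S then 1 else 0,
    fun i => if i ∈ S then (#(G.neighborFinset i ∩ S) : ℝ) else 0,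
    fun t => if t = #S then 1 else 0, fun i => ?_, fun i => ?_, fun i => ?_, fun t _ => ?_, ?_, ?_,
    ?_, ?_⟩
  · dsimp only
    split_ifs <;> simp
  · dsimp only
    split_ifs
    · simpa only [mul_one, ← SimpleGraph.card_neighborFinset_eq_degree] using
        (Nat.cast_le.2 (card_le_card inter_subset_left) : _ ≤ (_ : ℝ))
    · simp
  · dsimp only
    rw [sum_neighborFinset_ite_mem]
    split_ifs <;> simp
  · dsimp only
    split_ifs <;> simp
  · simp [hS_size]
  · simp [hS_size]
  · rw [sum_ite_card_neighborFinset_inter]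
    simpa [hS_size] using (two_mul_edgesIn_ge_iff_isQuasiClique G).2 hS
  · congr 1
    ext i
    by_cases hi : i ∈ S <;> simp [hi]

theorem compactMIPValues_eq {γ : ℝ} (hγ : 0 ≤ γ) :
    compactMIPValues G γ = {k | ∃ S : Finset V, IsQuasiClique G γ S ∧ #S = k} := by
  ext k
  constructor
  · rintro ⟨x, w, s, hx, hdeg, hnbr, hs0, hs1, hmean, hw, rfl⟩
    set S := univ.filter fun i => x i = 1
    have hxS : x = fun i => if i ∈ S then 1 else 0 :=
      funext fun i => by rcases hx i with h | h <;> simp [S, h]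
    rw [hxS] at hdeg hnbr hmean
    rw [sum_boole, filter_mem_eq_inter, univ_inter] at hmean
    exact ⟨S, isQuasiClique_of_feasible_s9 G hγ _ hdeg hnbr hs0 hs1 hmean hw, rfl⟩
  · rintro ⟨S, hS, rfl⟩
    exact card_mem_compactMIPValues G hS

end Graph

theorem veremyev_compact_mip_correct {V : Type*} [Fintype V] [DecidableEq V]
    (G : SimpleGraph V) [DecidableRel G.Adj]
    (γ : ℝ) (hγ : γ ∈ Set.Ioc (0 : ℝ) 1) :
    sSup {k : ℕ | ∃ (x : V → ℝ) (w : V → ℝ) (s : ℕ → ℝ),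
        (∀ i, x i = 0 ∨ x i = 1) ∧
        (∀ i, w i ≤ (G.degree i : ℝ) * x i) ∧
        (∀ i, w i ≤ ∑ j ∈ G.neighborFinset i, x j) ∧
        (∀ t ∈ Finset.range (Fintype.card V + 1), 0 ≤ s t) ∧
        ∑ t ∈ Finset.range (Fintype.card V + 1), s t = 1 ∧
        ∑ i, x i = ∑ t ∈ Finset.range (Fintype.card V + 1), (t : ℝ) * s t ∧
        ∑ i, w i
          ≥ γ * ∑ t ∈ Finset.range (Fintype.card V + 1),
              ((t : ℝ) * ((t : ℝ) - 1)) * s t ∧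
        (Finset.univ.filter fun i => x i = 1).card = k}
      = quasiCliqueNum G γ := by
  change sSup (compactMIPValues G γ) = _
  rw [compactMIPValues_eq G hγ.1.le, quasiCliqueNum]
end

section
/- Let Q, Z₁, Z₂ ∈ ℝ^{n×n} be real matrices such that the 2n×2n block matrix [[Z₁, Q],[Qᵀ, Z₂]] is positive semidefinite. Then (1/2)(trace(Z₁) + trace(Z₂)) ≥ ‖Q‖_*, where ‖Q‖_* denotes the nuclear norm of Q, i.e. the sum of the square roots of the eigenvalues of QᵀQ. -/
/-!
Let `σᵢ = √λᵢ`, where `vᵢ` are orthonormal eigenvectors of `Qᵀ Q` with eigenvalues `λᵢ`. The vectors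
`Q vᵢ` are pairwise orthogonal of length `σᵢ`, so there is an orthonormal basis `uᵢ` with
`Q vᵢ = σᵢ uᵢ` (a singular value decomposition). Testing the positive semidefinite block matrix
against `(uᵢ, -vᵢ)` gives `2 σᵢ ≤ uᵢᵀ Z₁ uᵢ + vᵢᵀ Z₂ vᵢ`, and summing over `i` turns the right-hand
side into `trace Z₁ + trace Z₂`, since a trace is the sum of the diagonal entries in any orthonormal
basis.
-/

open Matrix

theorem Matrix.trace_eq_sum_star_dotProduct_mulVec {𝕜 m ι : Type*} [RCLike 𝕜] [Fintype m]
    [DecidableEq m] [Fintype ι] (A : Matrix m m 𝕜)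
    (b : OrthonormalBasis ι 𝕜 (EuclideanSpace 𝕜 m)) :
    A.trace = ∑ i, star ⇑(b i) ⬝ᵥ A *ᵥ ⇑(b i) := by
  rw [← trace_toLin_eq A (EuclideanSpace.basisFun m 𝕜).toBasis,
    ← toEuclideanLin_eq_toLin_orthonormal, LinearMap.trace_eq_sum_inner _ b]
  simp only [EuclideanSpace.inner_eq_star_dotProduct, Matrix.ofLp_toLpLin, Matrix.toLin'_apply,
    dotProduct_comm]

theorem OrthonormalBasis.dotProduct_apply {ι m : Type*} [Fintype ι] [Fintype m] [DecidableEq ι]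
    (b : OrthonormalBasis ι ℝ (EuclideanSpace ℝ m)) (i j : ι) :
    ⇑(b i) ⬝ᵥ ⇑(b j) = if i = j then 1 else 0 := by
  rw [dotProduct_comm, ← star_trivial ⇑(b i), ← EuclideanSpace.inner_eq_star_dotProduct]
  exact orthonormal_iff_ite.mp b.orthonormal i j

theorem Matrix.PosSemidef.two_mul_dotProduct_mulVec_le {m n : Type*} [Fintype m] [Fintype n]
    {A : Matrix m m ℝ} {B : Matrix m n ℝ} {D : Matrix n n ℝ}
    (h : (fromBlocks A B Bᵀ D).PosSemidef) (x : m → ℝ) (y : n → ℝ) :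
    2 * (x ⬝ᵥ B *ᵥ y) ≤ x ⬝ᵥ A *ᵥ x + y ⬝ᵥ D *ᵥ y := by
  have := h.dotProduct_mulVec_nonneg (Sum.elim x (-y))
  simp only [star_trivial, fromBlocks_mulVec, Sum.elim_comp_inl, Sum.elim_comp_inr,
    sumElim_dotProduct_sumElim, mulVec_neg, dotProduct_add, dotProduct_neg, neg_dotProduct,
    neg_neg, mulVec_transpose] at this
  rw [dotProduct_comm y, ← dotProduct_mulVec] at this
  linarith

namespace Matrix.IsHermitian

variable {k m : Type*} [Fintype k] [Fintype m] [DecidableEq m] {Q : Matrix k m ℝ}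
  (hH : (Qᵀ * Q).IsHermitian)

theorem mulVec_dotProduct_mulVec_eigenvectorBasis (i j : m) :
    (Q *ᵥ ⇑(hH.eigenvectorBasis i)) ⬝ᵥ (Q *ᵥ ⇑(hH.eigenvectorBasis j)) =
      if i = j then hH.eigenvalues i else 0 := by
  rw [dotProduct_mulVec, ← mulVec_transpose, mulVec_mulVec, hH.mulVec_eigenvectorBasis,
    smul_dotProduct, OrthonormalBasis.dotProduct_apply, smul_eq_mul, mul_ite, mul_one, mul_zero]

theorem eigenvalues_eq_mulVec_dotProduct_mulVec (i : m) :
    hH.eigenvalues i = (Q *ᵥ ⇑(hH.eigenvectorBasis i)) ⬝ᵥ (Q *ᵥ ⇑(hH.eigenvectorBasis i)) := by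
  rw [mulVec_dotProduct_mulVec_eigenvectorBasis, if_pos rfl]

theorem eigenvalues_nonneg_of_transpose_mul_self (i : m) : 0 ≤ hH.eigenvalues i := by
  rw [eigenvalues_eq_mulVec_dotProduct_mulVec]
  exact Finset.sum_nonneg fun j _ => mul_self_nonneg _

theorem exists_orthonormalBasis_mulVec_eigenvectorBasis_eq
    (hk : Fintype.card k = Fintype.card m) :
    ∃ b : OrthonormalBasis m ℝ (EuclideanSpace ℝ k),
      ∀ i, Q *ᵥ ⇑(hH.eigenvectorBasis i) = √(hH.eigenvalues i) • ⇑(b i) := by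
  set σ : m → ℝ := fun i => √(hH.eigenvalues i)
  have hσ : ∀ i, hH.eigenvalues i ≠ 0 → σ i ≠ 0 := fun i hi =>
    (Real.sqrt_ne_zero (eigenvalues_nonneg_of_transpose_mul_self hH i)).2 hi
  set u : m → EuclideanSpace ℝ k :=
    fun i => WithLp.toLp 2 ((σ i)⁻¹ • (Q *ᵥ ⇑(hH.eigenvectorBasis i)))
  have hu : Orthonormal ℝ ({i | hH.eigenvalues i ≠ 0}.domRestrict u) := by
    rw [orthonormal_iff_ite]
    rintro ⟨i, hi⟩ ⟨j, hj⟩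
    simp only [Set.domRestrict_apply, u, EuclideanSpace.inner_toLp_toLp, star_trivial,
      smul_dotProduct, dotProduct_smul, smul_eq_mul, mulVec_dotProduct_mulVec_eigenvectorBasis,
      Subtype.mk.injEq]
    rcases eq_or_ne i j with rfl | hij
    · rw [if_pos rfl, if_pos rfl, ← mul_assoc, ← mul_inv,
        Real.mul_self_sqrt (eigenvalues_nonneg_of_transpose_mul_self hH i), inv_mul_cancel₀ hi]
    · rw [if_neg hij.symm, if_neg hij, mul_zero, mul_zero]
  obtain ⟨b, hb⟩ := hu.exists_orthonormalBasis_extension_of_card_eq (by simpa using hk)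
  refine ⟨b, fun i => ?_⟩
  by_cases hi : hH.eigenvalues i = 0
  · rw [hi, Real.sqrt_zero, zero_smul, ← dotProduct_self_eq_zero,
      ← eigenvalues_eq_mulVec_dotProduct_mulVec, hi]
  · rw [hb i hi, WithLp.ofLp_toLp, smul_smul, mul_inv_cancel₀ (hσ i hi), one_smul]

end Matrix.IsHermitian

theorem sdp_trace_ge_nuclearNorm {n : ℕ} (Q Z₁ Z₂ : Matrix (Fin n) (Fin n) ℝ)
    (hPSD : (Matrix.fromBlocks Z₁ Q Qᵀ Z₂).PosSemidef)
    (hH : (Qᵀ * Q).IsHermitian) :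
    (1 / 2 : ℝ) * (Z₁.trace + Z₂.trace) ≥ ∑ i, Real.sqrt (hH.eigenvalues i) := by
  set v := hH.eigenvectorBasis
  obtain ⟨u, hu⟩ := hH.exists_orthonormalBasis_mulVec_eigenvectorBasis_eq rfl
  have key : ∀ i, 2 * √(hH.eigenvalues i) ≤ u i ⬝ᵥ Z₁ *ᵥ u i + v i ⬝ᵥ Z₂ *ᵥ v i := by
    intro i
    have := hPSD.two_mul_dotProduct_mulVec_le (u i) (v i)
    rwa [hu i, dotProduct_smul, u.dotProduct_apply, if_pos rfl, smul_eq_mul, mul_one] at this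
  have htrace : Z₁.trace + Z₂.trace = ∑ i, (u i ⬝ᵥ Z₁ *ᵥ u i + v i ⬝ᵥ Z₂ *ᵥ v i) := by
    rw [Finset.sum_add_distrib, Z₁.trace_eq_sum_star_dotProduct_mulVec u,
      Z₂.trace_eq_sum_star_dotProduct_mulVec v]
    simp only [star_trivial]
  have hsum := Finset.sum_le_sum fun i (_ : i ∈ Finset.univ) => key i
  rw [← Finset.mul_sum, ← htrace] at hsum
  linarith
end

section
/- Let Q ∈ ℝ^{n×n} be a real matrix. There exist symmetric matrices Z₁, Z₂ ∈ ℝ^{n×n} such that the 2n×2n block matrix [[Z₁, Q],[Qᵀ, Z₂]] is positive semidefinite and (1/2)(trace(Z₁) + trace(Z₂)) = ‖Q‖_*, where ‖Q‖_* denotes the nuclear norm of Q, i.e. the sum of the square roots of the eigenvalues of QᵀQ. -/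
/-!
Diagonalise `Qᴴ Q = V diag(λ) Vᴴ` and put `σ = √λ`. The columns of `W = Q V` are orthogonal with
norms `σᵢ`, so a column with `σᵢ = 0` vanishes and `W diag(σ⁻¹ σ) = W` (with `0⁻¹ = 0`), i.e.
`Q = W diag(σ)⁻¹ (V diag σ)ᴴ`. Hence for `X = [W; V diag σ]` the matrix `X diag(σ)⁻¹ Xᴴ` is a
positive semidefinite block matrix with off-diagonal block `Q`, and both of its diagonal blocks
have trace `∑ σᵢ`.
-/

open Matrix

namespace Matrix

variable {m n k R : Type*}

theorem PosSemidef.fromBlocks_mul_mul_conjTranspose [Fintype m] [Fintype n] [Fintype k]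
    [CommRing R] [PartialOrder R] [StarRing R] [StarOrderedRing R] {D : Matrix k k R}
    (hD : D.PosSemidef) (A : Matrix m k R) (B : Matrix n k R) :
    (fromBlocks (A * D * Aᴴ) (A * D * Bᴴ) (A * D * Bᴴ)ᴴ (B * D * Bᴴ)).PosSemidef := by
  convert hD.mul_mul_conjTranspose_same (fromRows A B) using 1
  rw [conjTranspose_fromRows_eq_fromCols_conjTranspose, fromRows_mul, fromRows_mul_fromCols]
  simp only [conjTranspose_mul, hD.isHermitian.eq, conjTranspose_conjTranspose, Matrix.mul_assoc]

theorem conjTranspose_mul_self_apply_self_eq_zero [Fintype m] [CommRing R] [PartialOrder R]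
    [StarRing R] [StarOrderedRing R] [NoZeroDivisors R] {W : Matrix m n R} {i : n} :
    (Wᴴ * W) i i = 0 ↔ ∀ j, W j i = 0 := by
  simpa [funext_iff, mul_apply, dotProduct] using dotProduct_star_self_eq_zero (v := fun j ↦ W j i)

theorem mul_diagonal_eq_self_of_conjTranspose_mul_self_eq_diagonal [Fintype m] [Fintype n]
    [DecidableEq n] [CommRing R] [PartialOrder R] [StarRing R] [StarOrderedRing R]
    [NoZeroDivisors R] {W : Matrix m n R} {d c : n → R} (hW : Wᴴ * W = diagonal d)
    (hc : ∀ i, d i ≠ 0 → c i = 1) :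
    W * diagonal c = W := by
  ext j i
  rw [mul_diagonal]
  by_cases hd : d i = 0
  · have hcol := congr_fun₂ hW i i
    rw [diagonal_apply_eq, hd, conjTranspose_mul_self_apply_self_eq_zero] at hcol
    rw [hcol, zero_mul]
  · rw [hc i hd, mul_one]

variable {𝕜 : Type*} [RCLike 𝕜] [Fintype m] [Fintype n] [DecidableEq n]

theorem IsHermitian.conjTranspose_mul_self_eigenvectorUnitary {Q : Matrix m n 𝕜}
    (hH : (Qᴴ * Q).IsHermitian) :
    (Q * (hH.eigenvectorUnitary : Matrix n n 𝕜))ᴴ * (Q * (hH.eigenvectorUnitary : Matrix n n 𝕜)) =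
      diagonal (RCLike.ofReal ∘ hH.eigenvalues) := by
  rw [← hH.conjStarAlgAut_star_eigenvectorUnitary, Unitary.conjStarAlgAut_star_apply]
  simp only [conjTranspose_mul, star_eq_conjTranspose, Matrix.mul_assoc]

open scoped ComplexOrder in
theorem exists_posSemidef_fromBlocks_trace_eq_sum_sqrt_eigenvalues {H : Matrix n n 𝕜}
    (hH : H.IsHermitian) (Q : Matrix m n 𝕜) (hQ : Qᴴ * Q = H) :
    ∃ Z₁ Z₂, (fromBlocks Z₁ Q Qᴴ Z₂).PosSemidef ∧
      Z₁.trace = ((∑ i, √(hH.eigenvalues i) : ℝ) : 𝕜) ∧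
      Z₂.trace = ((∑ i, √(hH.eigenvalues i) : ℝ) : 𝕜) := by
  subst hQ
  have hW := hH.conjTranspose_mul_self_eigenvectorUnitary
  set d := hH.eigenvalues
  set V : Matrix n n 𝕜 := (hH.eigenvectorUnitary : Matrix n n 𝕜)
  set σ : n → 𝕜 := fun i ↦ ((√(d i) : ℝ) : 𝕜)
  have hd : ∀ i, 0 ≤ d i := (posSemidef_conjTranspose_mul_self Q).eigenvalues_nonneg
  have hdσ : ∀ i, (d i : 𝕜) = σ i * σ i := fun i ↦ by
    rw [← RCLike.ofReal_mul, Real.mul_self_sqrt (hd i)]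
  have hVV : Vᴴ * V = 1 := Unitary.coe_star_mul_self _
  have hVV' : V * Vᴴ = 1 := Unitary.coe_mul_star_self _
  have hWσ : Q * V * diagonal (fun i ↦ σ⁻¹ i * σ i) = Q * V :=
    mul_diagonal_eq_self_of_conjTranspose_mul_self_eq_diagonal hW fun i hi ↦
      inv_mul_cancel₀ fun hσ ↦ hi (by rw [Function.comp_apply, hdσ i, hσ, zero_mul])
  have hσ : (diagonal σ)ᴴ = diagonal σ := by
    simp [diagonal_conjTranspose, σ]
  have hD : (diagonal σ⁻¹).PosSemidef := posSemidef_diagonal_iff.mpr fun i ↦ by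
    rw [Pi.inv_apply, ← RCLike.ofReal_inv]
    exact RCLike.ofReal_nonneg.mpr (inv_nonneg.mpr (Real.sqrt_nonneg _))
  have hQ : Q * V * diagonal σ⁻¹ * (V * diagonal σ)ᴴ = Q := by
    rw [conjTranspose_mul, hσ, ← Matrix.mul_assoc, Matrix.mul_assoc (Q * V), diagonal_mul_diagonal,
      hWσ, Matrix.mul_assoc, hVV', Matrix.mul_one]
  refine ⟨_, _, hQ ▸ hD.fromBlocks_mul_mul_conjTranspose (Q * V) (V * diagonal σ), ?_, ?_⟩
  · rw [trace_mul_comm, ← Matrix.mul_assoc, hW, diagonal_mul_diagonal, trace_diagonal]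
    push_cast
    refine Finset.sum_congr rfl fun i _ ↦ ?_
    rw [Function.comp_apply, hdσ]
    exact mul_self_mul_inv (σ i)
  · rw [conjTranspose_mul, hσ, ← Matrix.mul_assoc, trace_mul_comm, ← Matrix.mul_assoc,
      ← Matrix.mul_assoc, ← Matrix.mul_assoc, hVV, Matrix.one_mul, diagonal_mul_diagonal,
      diagonal_mul_diagonal, trace_diagonal]
    push_cast
    exact Finset.sum_congr rfl fun i _ ↦ mul_inv_mul_cancel (σ i)

end Matrix

theorem sdp_nuclearNorm_attained {n : ℕ} (Q : Matrix (Fin n) (Fin n) ℝ)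
    (hH : (Qᵀ * Q).IsHermitian) :
    ∃ Z₁ Z₂ : Matrix (Fin n) (Fin n) ℝ, Z₁.IsSymm ∧ Z₂.IsSymm ∧
      (Matrix.fromBlocks Z₁ Q Qᵀ Z₂).PosSemidef ∧
      (1 / 2 : ℝ) * (Z₁.trace + Z₂.trace) = ∑ i, Real.sqrt (hH.eigenvalues i) := by
  have hQ : Qᴴ = Qᵀ := conjTranspose_eq_transpose_of_trivial Q
  obtain ⟨Z₁, Z₂, hZ, h₁, h₂⟩ :=
    exists_posSemidef_fromBlocks_trace_eq_sum_sqrt_eigenvalues hH Q (by rw [hQ])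
  rw [hQ] at hZ
  obtain ⟨hZ₁, -, -, hZ₂⟩ := isHermitian_fromBlocks_iff.mp hZ.isHermitian
  refine ⟨Z₁, Z₂, isHermitian_iff_isSymm.mp hZ₁, isHermitian_iff_isSymm.mp hZ₂, hZ, ?_⟩
  rw [h₁, h₂, RCLike.ofReal_real_eq_id, id]
  ring
end
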